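/- arXiv:1501.04317 — 2 statements merged into one kernel-verified Lean document; each statement's English description precedes it below -/
import Mathlib

section
/- Suppose q : ℝ → ℝ^N is a twice continuously differentiable solution of ρ·q̈ + (C + U·C̃)·q̇ + K·q = U(t)·F̃(t) (i.e., F ≡ 0), where |F̃(t)| ≤ F̃_max for all t, and the control is U = u_nom + v₁ with u_nom(t) = u_max_p·s(t)/√(1 + s(t)²), T₁(t) = F̃_max·|q̇(t)|·(v_1max + u_max_p), and v₁(t) = v_1max·T₁(t)·s(t)/√(1 + T₁(t)²·s(t)²), where s(t) = q̇(t)ᵀC̃q̇(t) and u_max_p, v_1max > 0. Then for all t, d/dt V(q(t), q̇(t)) ≤ T₁(t)·(1 − v_1max·s(t)²/√(1 + T₁(t)²·s(t)²)). -/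
/-!
Differentiating `V` along the solution and inserting the equation of motion gives
`V̇ = U q̇ᵀF̃ − q̇ᵀCq̇ − U s`. Both controls are saturations of the form `c x / √(1 + x²)`, so
`|U| ≤ u_max_p + v_1max`, and Cauchy–Schwarz bounds the disturbance work `U q̇ᵀF̃` by `T₁`. The
damping `q̇ᵀCq̇` and `u_nom s` are nonnegative, while `v₁ s` equals `T₁ v_1max s² / √(1 + T₁² s²)`.
-/

open Matrix

/-- Lyapunov function `V(q,p) = (ρ/2) pᵀp + (1/2) qᵀKq`. -/
noncomputable def V {N : ℕ} (ρ : ℝ) (K : Matrix (Fin N) (Fin N) ℝ)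
    (q p : Fin N → ℝ) : ℝ :=
  ρ / 2 * (p ⬝ᵥ p) + 1 / 2 * (q ⬝ᵥ K.mulVec q)

section DotProduct

variable {m n : Type*} [Fintype n] {f g : ℝ → n → ℝ} {f' g' : n → ℝ} {t : ℝ}

theorem HasDerivAt.dotProduct (hf : HasDerivAt f f' t) (hg : HasDerivAt g g' t) :
    HasDerivAt (fun τ => f τ ⬝ᵥ g τ) (f' ⬝ᵥ g t + f t ⬝ᵥ g') t := by
  simpa only [_root_.dotProduct, Finset.sum_add_distrib] using
    HasDerivAt.fun_sum (u := Finset.univ) fun i _ =>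
      (hasDerivAt_pi.1 hf i).fun_mul (hasDerivAt_pi.1 hg i)

theorem HasDerivAt.mulVec (A : Matrix m n ℝ) (hf : HasDerivAt f f' t) :
    HasDerivAt (fun τ => A *ᵥ f τ) (A *ᵥ f') t :=
  hasDerivAt_pi.2 fun i => by
    simpa only [Matrix.mulVec, _root_.dotProduct] using
      HasDerivAt.fun_sum (u := Finset.univ) fun j _ => (hasDerivAt_pi.1 hf j).const_mul (A i j)

theorem abs_dotProduct_le_sqrt_mul_sqrt (v w : n → ℝ) :
    |v ⬝ᵥ w| ≤ √(v ⬝ᵥ v) * √(w ⬝ᵥ w) := by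
  have hv : 0 ≤ v ⬝ᵥ v := Fintype.sum_nonneg fun i => mul_self_nonneg (v i)
  rw [← Real.sqrt_mul hv]
  exact Real.abs_le_sqrt (by simpa only [dotProduct, sq] using
    Finset.sum_mul_sq_le_sq_mul_sq Finset.univ v w)

theorem mul_dotProduct_le_of_abs_le {u U M : ℝ} {p w : n → ℝ}
    (hu : |u| ≤ U) (hw : √(w ⬝ᵥ w) ≤ M) : u * (p ⬝ᵥ w) ≤ M * √(p ⬝ᵥ p) * U := by
  have hM : 0 ≤ M := (Real.sqrt_nonneg _).trans hw
  calc u * (p ⬝ᵥ w) ≤ |u| * |p ⬝ᵥ w| := (le_abs_self _).trans (abs_mul _ _).le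
    _ ≤ U * (√(p ⬝ᵥ p) * M) := by
        gcongr
        · exact (abs_nonneg u).trans hu
        · exact (abs_dotProduct_le_sqrt_mul_sqrt p w).trans (by gcongr)
    _ = M * √(p ⬝ᵥ p) * U := by ring

end DotProduct

theorem abs_mul_div_sqrt_one_add_sq_le {c : ℝ} (hc : 0 ≤ c) (x : ℝ) :
    |c * x / √(1 + x ^ 2)| ≤ c := by
  have hx : |x| ≤ √(1 + x ^ 2) := Real.abs_le_sqrt (by linarith)
  rw [abs_div, abs_mul, abs_of_nonneg hc, abs_of_nonneg (Real.sqrt_nonneg _),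
    div_le_iff₀ (by positivity)]
  exact mul_le_mul_of_nonneg_left hx hc

theorem mul_div_sqrt_one_add_sq_mul_self_nonneg {c : ℝ} (hc : 0 ≤ c) (x : ℝ) :
    0 ≤ c * x / √(1 + x ^ 2) * x := by
  rw [div_mul_eq_mul_div, mul_assoc, ← sq]
  positivity

theorem hasDerivAt_V_of_ode {N : ℕ} {ρ u : ℝ} {C Ct K : Matrix (Fin N) (Fin N) ℝ} (hK : K.IsSymm)
    {q q' : ℝ → Fin N → ℝ} {a F : Fin N → ℝ} {t : ℝ}
    (hq : HasDerivAt q (q' t) t) (hq' : HasDerivAt q' a t)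
    (hode : ρ • a + C *ᵥ q' t + u • Ct *ᵥ q' t + K *ᵥ q t = u • F) :
    HasDerivAt (fun τ => V ρ K (q τ) (q' τ))
      (u * (q' t ⬝ᵥ F) - q' t ⬝ᵥ C *ᵥ q' t - u * (q' t ⬝ᵥ Ct *ᵥ q' t)) t := by
  have hKsymm : q t ⬝ᵥ K *ᵥ q' t = q' t ⬝ᵥ K *ᵥ q t := by
    rw [dotProduct_mulVec, ← mulVec_transpose, hK.eq, dotProduct_comm]
  have hpower := congrArg (q' t ⬝ᵥ ·) hode
  simp only [dotProduct_add, dotProduct_smul, smul_eq_mul] at hpower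
  refine (((hq'.dotProduct hq').const_mul (ρ / 2)).add
    ((hq.dotProduct (hq.mulVec K)).const_mul (1 / 2))).congr_deriv ?_
  rw [dotProduct_comm a, hKsymm]
  linarith

theorem stmt_9_general (N : ℕ) (ρ : ℝ)
    (u_max_p v_1max : ℝ) (hump : 0 < u_max_p) (hv1 : 0 < v_1max)
    (C Ct K : Matrix (Fin N) (Fin N) ℝ)
    (hC : C.PosSemidef) (hK : K.PosDef)
    (q : ℝ → Fin N → ℝ) (hq : ContDiff ℝ 2 q)
    (Ft : ℝ → Fin N → ℝ)
    (Ftmax : ℝ) (hFtb : ∀ t, Real.sqrt (Ft t ⬝ᵥ Ft t) ≤ Ftmax)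
    (s T₁ u_nom v₁ U : ℝ → ℝ)
    (hs : ∀ t, s t = deriv q t ⬝ᵥ Ct.mulVec (deriv q t))
    (hT₁ : ∀ t, T₁ t = Ftmax * Real.sqrt (deriv q t ⬝ᵥ deriv q t) * (v_1max + u_max_p))
    (hunom : ∀ t, u_nom t = u_max_p * s t / Real.sqrt (1 + s t ^ 2))
    (hv₁ : ∀ t, v₁ t = v_1max * T₁ t * s t / Real.sqrt (1 + T₁ t ^ 2 * s t ^ 2))
    (hU : ∀ t, U t = u_nom t + v₁ t)
    (hode : ∀ t, ρ • deriv (deriv q) t + C.mulVec (deriv q t)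
        + U t • Ct.mulVec (deriv q t) + K.mulVec (q t) = U t • Ft t) :
    ∀ t, deriv (fun τ => V ρ K (q τ) (deriv q τ)) t
      ≤ T₁ t * (1 - v_1max * s t ^ 2 / Real.sqrt (1 + T₁ t ^ 2 * s t ^ 2)) := by
  intro t
  have hV := hasDerivAt_V_of_ode (isHermitian_iff_isSymm.mp hK.1)
    ((hq.differentiable two_ne_zero) t).hasDerivAt (hq.differentiable_deriv_two t).hasDerivAt
    (hode t)
  rw [hV.deriv, ← hs t]
  have hv₁' : v₁ t = v_1max * (T₁ t * s t) / √(1 + (T₁ t * s t) ^ 2) := by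
    rw [hv₁ t, mul_pow, mul_assoc]
  have hUbound : |U t| ≤ v_1max + u_max_p := by
    rw [hU t, hunom t, hv₁', add_comm v_1max]
    exact (abs_add_le _ _).trans (add_le_add (abs_mul_div_sqrt_one_add_sq_le hump.le _)
      (abs_mul_div_sqrt_one_add_sq_le hv1.le _))
  have hwork : U t * (deriv q t ⬝ᵥ Ft t) ≤ T₁ t :=
    hT₁ t ▸ mul_dotProduct_le_of_abs_le hUbound (hFtb t)
  have hdamp : 0 ≤ deriv q t ⬝ᵥ C *ᵥ deriv q t := by
    simpa using hC.dotProduct_mulVec_nonneg (deriv q t)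
  have hnom : 0 ≤ u_nom t * s t := hunom t ▸ mul_div_sqrt_one_add_sq_mul_self_nonneg hump.le _
  have hv₁s : v₁ t * s t = T₁ t * (v_1max * s t ^ 2 / √(1 + T₁ t ^ 2 * s t ^ 2)) := by
    rw [hv₁ t]; ring
  have hUs : U t * s t = u_nom t * s t + v₁ t * s t := by rw [hU t, add_mul]
  linarith

/-- Along any C² solution of
`ρ q̈ + (C + U C̃) q̇ + K q = U(t) F̃(t)` (i.e. `F ≡ 0`) with `|F̃(t)| ≤ F̃max`
(Euclidean norm) and the control `U = u_nom + v₁`, where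
`u_nom t = u_max_p s t / √(1 + s t ^ 2)`,
`T₁ t = F̃max |q̇ t| (v_1max + u_max_p)`, and
`v₁ t = v_1max T₁ t s t / √(1 + T₁ t ^ 2 s t ^ 2)` with `s t = q̇ᵀ C̃ q̇` and
`u_max_p, v_1max > 0`, one has for all `t`:
`d/dt V(q t, q̇ t) ≤ T₁ t (1 − v_1max s t ^ 2 / √(1 + T₁ t ^ 2 s t ^ 2))`. -/
theorem stmt_9 (N : ℕ) (hN : 1 ≤ N) (ρ : ℝ) (hρ : 0 < ρ)
    (u_max_p v_1max : ℝ) (hump : 0 < u_max_p) (hv1 : 0 < v_1max)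
    (C Ct K : Matrix (Fin N) (Fin N) ℝ)
    (hC : C.PosSemidef) (hCt : Ct.PosDef) (hK : K.PosDef)
    (q : ℝ → Fin N → ℝ) (hq : ContDiff ℝ 2 q)
    (Ft : ℝ → Fin N → ℝ) (hFtc : Continuous Ft)
    (Ftmax : ℝ) (hFtb : ∀ t, Real.sqrt (Ft t ⬝ᵥ Ft t) ≤ Ftmax)
    (s T₁ u_nom v₁ U : ℝ → ℝ)
    (hs : ∀ t, s t = deriv q t ⬝ᵥ Ct.mulVec (deriv q t))
    (hT₁ : ∀ t, T₁ t = Ftmax * Real.sqrt (deriv q t ⬝ᵥ deriv q t) * (v_1max + u_max_p))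
    (hunom : ∀ t, u_nom t = u_max_p * s t / Real.sqrt (1 + s t ^ 2))
    (hv₁ : ∀ t, v₁ t = v_1max * T₁ t * s t / Real.sqrt (1 + T₁ t ^ 2 * s t ^ 2))
    (hU : ∀ t, U t = u_nom t + v₁ t)
    (hode : ∀ t, ρ • deriv (deriv q) t + C.mulVec (deriv q t)
        + U t • Ct.mulVec (deriv q t) + K.mulVec (q t) = U t • Ft t) :
    ∀ t, deriv (fun τ => V ρ K (q τ) (deriv q τ)) t
      ≤ T₁ t * (1 - v_1max * s t ^ 2 / Real.sqrt (1 + T₁ t ^ 2 * s t ^ 2)) :=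
  stmt_9_general N ρ u_max_p v_1max hump hv1 C Ct K hC hK q hq Ft Ftmax hFtb s T₁ u_nom v₁ U hs hT₁
    hunom hv₁ hU hode
end

section
/- Suppose q : ℝ → ℝ^N is a twice continuously differentiable solution of ρ·q̈ + (C + U·C̃)·q̇ + K·q = F(t) + U(t)·F̃(t), where |F(t)| ≤ F_max and |F̃(t)| ≤ F̃_max for all t, and the control is U = u_nom + v₁ + v₂ with u_nom(t) = u_max_p·s(t)/√(1 + s(t)²), v₁(t) = v_1max·T₁(t)·s(t)/√(1 + T₁(t)²·s(t)²), v₂(t) = v_2max·T₂(t)·s(t)/√(1 + T₂(t)²·s(t)²), where s(t) = q̇(t)ᵀC̃q̇(t), T₁(t) = F̃_max·|q̇(t)|·(v_1max + u_max_p), T₂(t) = |q̇(t)|·F_max + v_2max·F̃_max·|q̇(t)|, and u_max_p, v_1max, v_2max > 0. Then for all t, d/dt V(q(t), q̇(t)) ≤ B₁(t) + B₂(t), where B₁(t) = T₁(t)·(1 − v_1max·s(t)²/√(1 + T₁(t)²·s(t)²)) and B₂(t) = T₂(t)·(1 − v_2max·s(t)²/√(1 + T₂(t)²·s(t)²)).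 -/
open Matrix Filter

/-
Differentiating `V` along the trajectory and substituting the equation of motion gives
`V̇ = q̇ᵀF + U q̇ᵀF̃ − q̇ᵀCq̇ − U s`. The control is nonnegative and bounded by
`u_max_p + v_1max + v_2max`, so Cauchy–Schwarz bounds the disturbance terms by
`|q̇| (F_max + (u_max_p + v_1max + v_2max) F̃_max) = T₁ + T₂`; of the damping `U s` only
the part `(v₁ + v₂) s` is kept, and `Tᵢ − vᵢ s = Bᵢ`.
-/

section Calculus

variable {ι : Type*} [Fintype ι] {N : ℕ} {t : ℝ}

theorem hasDerivAt_dotProduct {u v : ℝ → ι → ℝ} {u' v' : ι → ℝ}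
    (hu : HasDerivAt u u' t) (hv : HasDerivAt v v' t) :
    HasDerivAt (fun τ => u τ ⬝ᵥ v τ) (u' ⬝ᵥ v t + u t ⬝ᵥ v') t := by
  simp only [dotProduct, ← Finset.sum_add_distrib]
  exact HasDerivAt.fun_sum fun i _ => (hasDerivAt_pi.1 hu i).mul (hasDerivAt_pi.1 hv i)

theorem hasDerivAt_mulVec (K : Matrix ι ι ℝ) {v : ℝ → ι → ℝ}
    {v' : ι → ℝ} (hv : HasDerivAt v v' t) :
    HasDerivAt (fun τ => K *ᵥ v τ) (K *ᵥ v') t := by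
  refine hasDerivAt_pi.2 fun i => ?_
  simp only [mulVec, dotProduct]
  exact HasDerivAt.fun_sum fun j _ => (hasDerivAt_pi.1 hv j).const_mul (K i j)

theorem hasDerivAt_V {ρ : ℝ} {K : Matrix (Fin N) (Fin N) ℝ} (hK : K.IsSymm)
    {q p : ℝ → Fin N → ℝ} {p' : Fin N → ℝ}
    (hq : HasDerivAt q (p t) t) (hp : HasDerivAt p p' t) :
    HasDerivAt (fun τ => V ρ K (q τ) (p τ)) (ρ * (p t ⬝ᵥ p') + p t ⬝ᵥ K *ᵥ q t) t := by
  have hKq : q t ⬝ᵥ K *ᵥ p t = p t ⬝ᵥ K *ᵥ q t := by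
    rw [dotProduct_mulVec, ← mulVec_transpose, hK.eq, dotProduct_comm]
  refine (((hasDerivAt_dotProduct hp hp).const_mul (ρ / 2)).add
    ((hasDerivAt_dotProduct hq (hasDerivAt_mulVec K hq)).const_mul (1 / 2))).congr_deriv ?_
  rw [hKq, dotProduct_comm p' (p t)]
  ring

theorem deriv_V_comp_eq {ρ : ℝ} {K : Matrix (Fin N) (Fin N) ℝ} (hK : K.IsSymm)
    {q : ℝ → Fin N → ℝ} (hq : ContDiff ℝ 2 q) (t : ℝ) :
    deriv (fun τ => V ρ K (q τ) (deriv q τ)) t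
      = ρ * (deriv q t ⬝ᵥ deriv (deriv q) t) + deriv q t ⬝ᵥ K *ᵥ q t := by
  have hdq : ContDiff ℝ 1 (deriv q) := (contDiff_succ_iff_deriv (n := 1)).1 hq |>.2.2
  exact (hasDerivAt_V hK ((hq.differentiable two_ne_zero) t).hasDerivAt
    ((hdq.differentiable one_ne_zero) t).hasDerivAt).deriv

end Calculus

theorem dotProduct_le_sqrt_mul_sqrt {ι : Type*} [Fintype ι] (u v : ι → ℝ) :
    u ⬝ᵥ v ≤ √(u ⬝ᵥ u) * √(v ⬝ᵥ v) := by
  have hsq : (u ⬝ᵥ v) ^ 2 ≤ (u ⬝ᵥ u) * (v ⬝ᵥ v) := by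
    simpa only [dotProduct, sq] using Finset.sum_mul_sq_le_sq_mul_sq Finset.univ u v
  have huu : 0 ≤ u ⬝ᵥ u := Finset.sum_nonneg fun i _ => mul_self_nonneg (u i)
  rw [← Real.sqrt_mul huu]
  exact (le_abs_self _).trans (Real.abs_le_sqrt hsq)

theorem mul_div_sqrt_one_add_sq_mem_Icc {c x : ℝ} (hc : 0 ≤ c) (hx : 0 ≤ x) :
    c * x / √(1 + x ^ 2) ∈ Set.Icc 0 c := by
  have hroot : 0 < √(1 + x ^ 2) := Real.sqrt_pos.2 (by positivity)
  refine ⟨by positivity, ?_⟩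
  rw [div_le_iff₀ hroot]
  exact mul_le_mul_of_nonneg_left (Real.le_sqrt_of_sq_le (by linarith)) hc

theorem mul_mul_div_sqrt_one_add_sq_mul_sq_mem_Icc {c x y : ℝ} (hc : 0 ≤ c) (hx : 0 ≤ x)
    (hy : 0 ≤ y) : c * x * y / √(1 + x ^ 2 * y ^ 2) ∈ Set.Icc 0 c := by
  rw [mul_assoc, ← mul_pow]
  exact mul_div_sqrt_one_add_sq_mem_Icc hc (mul_nonneg hx hy)

section Motion

variable {ι : Type*} [Fintype ι] {C Ct K : Matrix ι ι ℝ} {ρ u : ℝ} {x p a f g : ι → ℝ}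

theorem energy_rate_eq_of_motion
    (h : ρ • a + C *ᵥ p + u • Ct *ᵥ p + K *ᵥ x = f + u • g) :
    ρ * (p ⬝ᵥ a) + p ⬝ᵥ K *ᵥ x
      = p ⬝ᵥ f + u * (p ⬝ᵥ g) - p ⬝ᵥ C *ᵥ p - u * (p ⬝ᵥ Ct *ᵥ p) := by
  have := congrArg (p ⬝ᵥ ·) h
  simp only [dotProduct_add, dotProduct_smul, smul_eq_mul] at this
  linarith

theorem energy_rate_le_of_motion (hC : C.PosSemidef) (hu : 0 ≤ u) {Fm Gm : ℝ}
    (hf : √(f ⬝ᵥ f) ≤ Fm) (hg : √(g ⬝ᵥ g) ≤ Gm)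
    (h : ρ • a + C *ᵥ p + u • Ct *ᵥ p + K *ᵥ x = f + u • g) :
    ρ * (p ⬝ᵥ a) + p ⬝ᵥ K *ᵥ x
      ≤ √(p ⬝ᵥ p) * Fm + u * (√(p ⬝ᵥ p) * Gm) - u * (p ⬝ᵥ Ct *ᵥ p) := by
  have hCp : 0 ≤ p ⬝ᵥ C *ᵥ p := by simpa using hC.dotProduct_mulVec_nonneg p
  have hpf : p ⬝ᵥ f ≤ √(p ⬝ᵥ p) * Fm :=
    (dotProduct_le_sqrt_mul_sqrt p f).trans (by gcongr)
  have hpg : p ⬝ᵥ g ≤ √(p ⬝ᵥ p) * Gm :=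
    (dotProduct_le_sqrt_mul_sqrt p g).trans (by gcongr)
  rw [energy_rate_eq_of_motion h]
  linarith [mul_le_mul_of_nonneg_left hpg hu]

end Motion

theorem stmt_10_general (N : ℕ) (ρ : ℝ)
    (u_max_p v_1max v_2max : ℝ)
    (hump : 0 < u_max_p) (hv1 : 0 < v_1max) (hv2 : 0 < v_2max)
    (C Ct K : Matrix (Fin N) (Fin N) ℝ)
    (hC : C.PosSemidef) (hCt : Ct.PosDef) (hK : K.PosDef)
    (q : ℝ → Fin N → ℝ) (hq : ContDiff ℝ 2 q)
    (F Ft : ℝ → Fin N → ℝ)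
    (Fmax Ftmax : ℝ)
    (hFb : ∀ t, Real.sqrt (F t ⬝ᵥ F t) ≤ Fmax)
    (hFtb : ∀ t, Real.sqrt (Ft t ⬝ᵥ Ft t) ≤ Ftmax)
    (s T₁ T₂ u_nom v₁ v₂ U : ℝ → ℝ)
    (hs : ∀ t, s t = deriv q t ⬝ᵥ Ct.mulVec (deriv q t))
    (hT₁ : ∀ t, T₁ t = Ftmax * Real.sqrt (deriv q t ⬝ᵥ deriv q t) * (v_1max + u_max_p))
    (hT₂ : ∀ t, T₂ t = Real.sqrt (deriv q t ⬝ᵥ deriv q t) * Fmax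
        + v_2max * Ftmax * Real.sqrt (deriv q t ⬝ᵥ deriv q t))
    (hunom : ∀ t, u_nom t = u_max_p * s t / Real.sqrt (1 + s t ^ 2))
    (hv₁ : ∀ t, v₁ t = v_1max * T₁ t * s t / Real.sqrt (1 + T₁ t ^ 2 * s t ^ 2))
    (hv₂ : ∀ t, v₂ t = v_2max * T₂ t * s t / Real.sqrt (1 + T₂ t ^ 2 * s t ^ 2))
    (hU : ∀ t, U t = u_nom t + v₁ t + v₂ t)
    (hode : ∀ t, ρ • deriv (deriv q) t + C.mulVec (deriv q t)
        + U t • Ct.mulVec (deriv q t) + K.mulVec (q t) = F t + U t • Ft t) :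
    ∀ t, deriv (fun τ => V ρ K (q τ) (deriv q τ)) t
      ≤ T₁ t * (1 - v_1max * s t ^ 2 / Real.sqrt (1 + T₁ t ^ 2 * s t ^ 2))
        + T₂ t * (1 - v_2max * s t ^ 2 / Real.sqrt (1 + T₂ t ^ 2 * s t ^ 2)) := by
  intro t
  have hKsymm : K.IsSymm := by
    simpa only [IsSymm, IsHermitian, conjTranspose_eq_transpose_of_trivial] using hK.isHermitian
  have hs0 : 0 ≤ s t := by simpa [hs t] using hCt.posSemidef.dotProduct_mulVec_nonneg _
  have hFmax : 0 ≤ Fmax := (Real.sqrt_nonneg _).trans (hFb t)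
  have hFtmax : 0 ≤ Ftmax := (Real.sqrt_nonneg _).trans (hFtb t)
  have hT₁0 : 0 ≤ T₁ t := by rw [hT₁ t]; positivity
  have hT₂0 : 0 ≤ T₂ t := by rw [hT₂ t]; positivity
  obtain ⟨hu0, hu_le⟩ := hunom t ▸ mul_div_sqrt_one_add_sq_mem_Icc hump.le hs0
  obtain ⟨hv₁0, hv₁_le⟩ := hv₁ t ▸ mul_mul_div_sqrt_one_add_sq_mul_sq_mem_Icc hv1.le hT₁0 hs0
  obtain ⟨hv₂0, hv₂_le⟩ := hv₂ t ▸ mul_mul_div_sqrt_one_add_sq_mul_sq_mem_Icc hv2.le hT₂0 hs0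
  have hrate := energy_rate_le_of_motion hC (by rw [hU t]; positivity) (hFb t) (hFtb t) (hode t)
  have hB : T₁ t * (1 - v_1max * s t ^ 2 / √(1 + T₁ t ^ 2 * s t ^ 2))
      + T₂ t * (1 - v_2max * s t ^ 2 / √(1 + T₂ t ^ 2 * s t ^ 2))
      = T₁ t + T₂ t - (v₁ t + v₂ t) * s t := by
    rw [hv₁ t, hv₂ t]; ring
  rw [deriv_V_comp_eq hKsymm hq, hB, hT₁ t, hT₂ t]
  rw [← hs t, hU t] at hrate
  have hU_le : u_nom t + v₁ t + v₂ t ≤ u_max_p + v_1max + v_2max := by linarith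
  have hFt0 : 0 ≤ √(deriv q t ⬝ᵥ deriv q t) * Ftmax := by positivity
  linarith [mul_le_mul_of_nonneg_right hU_le hFt0, mul_nonneg hu0 hs0]

/-- Along any C² solution of
`ρ q̈ + (C + U C̃) q̇ + K q = F(t) + U(t) F̃(t)` with `|F(t)| ≤ Fmax`,
`|F̃(t)| ≤ F̃max` (Euclidean norms), driven by the control
`U = u_nom + v₁ + v₂` where `u_nom t = u_max_p s t / √(1 + s t ^ 2)`,
`v₁ t = v_1max T₁ t s t / √(1 + T₁ t ^ 2 s t ^ 2)`,
`v₂ t = v_2max T₂ t s t / √(1 + T₂ t ^ 2 s t ^ 2)`, with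
`s t = q̇ᵀ C̃ q̇`, `T₁ t = F̃max |q̇ t| (v_1max + u_max_p)`,
`T₂ t = |q̇ t| Fmax + v_2max F̃max |q̇ t|` and `u_max_p, v_1max, v_2max > 0`,
one has for all `t`: `d/dt V(q t, q̇ t) ≤ B₁ t + B₂ t`, where
`Bᵢ t = Tᵢ t (1 − v_imax s t ^ 2 / √(1 + Tᵢ t ^ 2 s t ^ 2))`. -/
theorem stmt_10 (N : ℕ) (hN : 1 ≤ N) (ρ : ℝ) (hρ : 0 < ρ)
    (u_max_p v_1max v_2max : ℝ)
    (hump : 0 < u_max_p) (hv1 : 0 < v_1max) (hv2 : 0 < v_2max)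
    (C Ct K : Matrix (Fin N) (Fin N) ℝ)
    (hC : C.PosSemidef) (hCt : Ct.PosDef) (hK : K.PosDef)
    (q : ℝ → Fin N → ℝ) (hq : ContDiff ℝ 2 q)
    (F Ft : ℝ → Fin N → ℝ) (hFc : Continuous F) (hFtc : Continuous Ft)
    (Fmax Ftmax : ℝ)
    (hFb : ∀ t, Real.sqrt (F t ⬝ᵥ F t) ≤ Fmax)
    (hFtb : ∀ t, Real.sqrt (Ft t ⬝ᵥ Ft t) ≤ Ftmax)
    (s T₁ T₂ u_nom v₁ v₂ U : ℝ → ℝ)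
    (hs : ∀ t, s t = deriv q t ⬝ᵥ Ct.mulVec (deriv q t))
    (hT₁ : ∀ t, T₁ t = Ftmax * Real.sqrt (deriv q t ⬝ᵥ deriv q t) * (v_1max + u_max_p))
    (hT₂ : ∀ t, T₂ t = Real.sqrt (deriv q t ⬝ᵥ deriv q t) * Fmax
        + v_2max * Ftmax * Real.sqrt (deriv q t ⬝ᵥ deriv q t))
    (hunom : ∀ t, u_nom t = u_max_p * s t / Real.sqrt (1 + s t ^ 2))
    (hv₁ : ∀ t, v₁ t = v_1max * T₁ t * s t / Real.sqrt (1 + T₁ t ^ 2 * s t ^ 2))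
    (hv₂ : ∀ t, v₂ t = v_2max * T₂ t * s t / Real.sqrt (1 + T₂ t ^ 2 * s t ^ 2))
    (hU : ∀ t, U t = u_nom t + v₁ t + v₂ t)
    (hode : ∀ t, ρ • deriv (deriv q) t + C.mulVec (deriv q t)
        + U t • Ct.mulVec (deriv q t) + K.mulVec (q t) = F t + U t • Ft t) :
    ∀ t, deriv (fun τ => V ρ K (q τ) (deriv q τ)) t
      ≤ T₁ t * (1 - v_1max * s t ^ 2 / Real.sqrt (1 + T₁ t ^ 2 * s t ^ 2))
        + T₂ t * (1 - v_2max * s t ^ 2 / Real.sqrt (1 + T₂ t ^ 2 * s t ^ 2)) :=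
  stmt_10_general N ρ u_max_p v_1max v_2max hump hv1 hv2 C Ct K hC hCt hK q hq F Ft Fmax Ftmax hFb
    hFtb s T₁ T₂ u_nom v₁ v₂ U hs hT₁ hT₂ hunom hv₁ hv₂ hU hode
end
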